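/- Let φ : ℝⁿ → ℝ be a smooth ℤⁿ-periodic function such that u(x) = ½|x|² + φ(x) has positive definite Hessian everywhere, and let ψ : ℝⁿ → ℝ be a smooth ℤⁿ-periodic function with ∫_{[0,1]ⁿ} Σ_{i,j,a,b} u^{ia} ψ_{ab} u^{bj} ψ_{ij} dx = 0, where ψ_{ab} denotes the entries of the Hessian of ψ. Then ψ is constant. -/

import Mathlib

open MeasureTheory Matrix

/-- Partial derivative in the `i`-th coordinate direction. -/
noncomputable def pd {n : ℕ} (i : Fin n) (f : (Fin n → ℝ) → ℝ) (x : Fin n → ℝ) : ℝ :=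
  fderiv ℝ f x (Pi.single i 1)

/-- Hessian matrix `(u_{ij})` of `u` at `x`. -/
noncomputable def hess {n : ℕ} (u : (Fin n → ℝ) → ℝ) (x : Fin n → ℝ) :
    Matrix (Fin n) (Fin n) ℝ :=
  Matrix.of fun i j => pd i (pd j u) x

/-- `f : ℝⁿ → ℝ` is ℤⁿ-periodic. -/
def ZPer {n : ℕ} (f : (Fin n → ℝ) → ℝ) : Prop :=
  ∀ (x : Fin n → ℝ) (k : Fin n → ℤ), f (x + fun i => (k i : ℝ)) = f x

/-- Abreu's operator `∑_{i,j} ∂²u^{ij}/∂x_i∂x_j`, where `(u^{ij})` is the inverse Hessian. -/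
noncomputable def abreuOp {n : ℕ} (u : (Fin n → ℝ) → ℝ) (x : Fin n → ℝ) : ℝ :=
  ∑ i, ∑ j, pd i (pd j (fun z => (hess u z)⁻¹ i j)) x

/-!
Write `B = (D²u)⁻¹` and `H = D²ψ`. The integrand is `tr (B H B Hᵀ)`, and factoring the positive
definite `B` as `Yᵀ Y` with `Y` invertible turns it into the squared Frobenius norm of `Y H Yᵀ`.
A continuous nonnegative function with zero integral over the unit cube vanishes on it, so
`D²ψ = 0` on the cube, hence everywhere by periodicity. Thus `Dψ` is constant, `ψ` is affine, and
a periodic affine function is constant.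
-/

namespace Matrix

variable {ι : Type*} [Fintype ι]

theorem sum_mul_mul_mul_eq_trace {R : Type*} [CommSemiring R] (B H : Matrix ι ι R) :
    ∑ i, ∑ j, ∑ a, ∑ b, B i a * H a b * B b j * H i j = trace (B * H * B * Hᵀ) := by
  simp only [trace, diag, mul_apply, transpose_apply, Finset.sum_mul]
  exact Finset.sum_congr rfl fun i _ => Finset.sum_congr rfl fun j _ => Finset.sum_comm

open scoped ComplexOrder

variable [DecidableEq ι] {𝕜 : Type*} [RCLike 𝕜] {B : Matrix ι ι 𝕜}

open scoped MatrixOrder in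
theorem PosDef.exists_trace_mul_mul_mul_conjTranspose_eq (hB : B.PosDef) (H : Matrix ι ι 𝕜) :
    ∃ Y : Matrix ι ι 𝕜, IsUnit Y ∧
      trace (B * H * B * Hᴴ) = trace (Y * H * Yᴴ * (Y * H * Yᴴ)ᴴ) := by
  obtain ⟨Y, hY, rfl⟩ :=
    CStarAlgebra.isStrictlyPositive_iff_eq_star_mul_self.mp hB.isStrictlyPositive
  refine ⟨Y, hY, ?_⟩
  simp only [star_eq_conjTranspose, conjTranspose_mul, conjTranspose_conjTranspose,
    Matrix.mul_assoc]
  rw [trace_mul_comm]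
  simp only [Matrix.mul_assoc]

theorem PosDef.trace_mul_mul_mul_conjTranspose_nonneg (hB : B.PosDef) (H : Matrix ι ι 𝕜) :
    0 ≤ trace (B * H * B * Hᴴ) := by
  obtain ⟨Y, -, hY⟩ := hB.exists_trace_mul_mul_mul_conjTranspose_eq H
  exact hY ▸ (posSemidef_self_mul_conjTranspose _).trace_nonneg

theorem PosDef.trace_mul_mul_mul_conjTranspose_eq_zero_iff (hB : B.PosDef)
    {H : Matrix ι ι 𝕜} : trace (B * H * B * Hᴴ) = 0 ↔ H = 0 := by
  obtain ⟨Y, hYu, hY⟩ := hB.exists_trace_mul_mul_mul_conjTranspose_eq H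
  rw [hY, trace_mul_conjTranspose_self_eq_zero_iff]
  lift Y to (Matrix ι ι 𝕜)ˣ using hYu
  constructor
  · intro h
    simpa [Matrix.mul_assoc] using congr(Y⁻¹ * $h * (Y : Matrix ι ι 𝕜)ᴴ⁻¹)
  · rintro rfl
    simp

end Matrix

theorem Continuous.matrix_inv {X ι 𝕜 : Type*} [TopologicalSpace X] [Fintype ι] [DecidableEq ι]
    [NormedField 𝕜] [CompleteSpace 𝕜] {A : X → Matrix ι ι 𝕜} (hA : Continuous A)
    (h : ∀ x, (A x).det ≠ 0) : Continuous fun x => (A x)⁻¹ :=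
  continuous_iff_continuousAt.mpr fun x =>
    (continuousAt_matrix_inv _ (NormedRing.inverse_continuousAt (Units.mk0 _ (h x)))).comp
      hA.continuousAt

theorem Set.Icc_subset_closure_interior_pi {ι : Type*} [Finite ι] {a b : ι → ℝ}
    (h : ∀ i, a i ≠ b i) : Set.Icc a b ⊆ closure (interior (Set.Icc a b)) := by
  rw [← Set.pi_univ_Icc, interior_pi_set Set.finite_univ, closure_pi_set]
  simp [closure_Ioo, h]

theorem MeasureTheory.eqOn_zero_of_setIntegral_eq_zero {X : Type*} [TopologicalSpace X]
    [T2Space X] [MeasurableSpace X] [OpensMeasurableSpace X] {μ : Measure X}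
    [μ.IsOpenPosMeasure] [IsFiniteMeasureOnCompacts μ] {s : Set X} {f : X → ℝ}
    (hs : IsCompact s) (hs' : s ⊆ closure (interior s)) (hf : ContinuousOn f s)
    (hf0 : ∀ x ∈ s, 0 ≤ f x) (hint : ∫ x in s, f x ∂μ = 0) : Set.EqOn f 0 s := by
  have hae := (setIntegral_eq_zero_iff_of_nonneg_ae
    ((ae_restrict_iff' hs.measurableSet).mpr (ae_of_all _ hf0))
    (hf.integrableOn_compact hs)).mp hint
  exact Measure.eqOn_of_ae_eq hae hf continuousOn_const hs'

variable {n : ℕ} {f : (Fin n → ℝ) → ℝ}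

theorem ContinuousLinearMap.eq_zero_of_apply_single {L : (Fin n → ℝ) →L[ℝ] ℝ}
    (h : ∀ i, L (Pi.single i 1) = 0) : L = 0 :=
  ContinuousLinearMap.coe_injective <| (Pi.basisFun ℝ (Fin n)).ext fun i => by simpa using h i

theorem fderiv_eq_zero_of_pd_eq_zero {x : Fin n → ℝ} (h : ∀ i, pd i f x = 0) :
    fderiv ℝ f x = 0 :=
  ContinuousLinearMap.eq_zero_of_apply_single h

theorem ContDiff.pd {k m : WithTop ℕ∞} (hf : ContDiff ℝ m f) (hkm : k + 1 ≤ m) (i : Fin n) :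
    ContDiff ℝ k (pd i f) :=
  (hf.fderiv_right hkm).clm_apply contDiff_const

theorem ContDiff.continuous_hess (hf : ContDiff ℝ 2 f) : Continuous (hess f) :=
  continuous_matrix fun i j =>
    ((hf.pd (k := 1) (by norm_num) j).pd (k := 0) (by norm_num) i).continuous

theorem pd_comp_add_const (c : Fin n → ℝ) (i : Fin n) :
    pd i (fun y => f (y + c)) = fun y => pd i f (y + c) := by
  ext y
  simp only [pd, fderiv_comp_add_right]

theorem ZPer.pd (hf : ZPer f) (i : Fin n) : ZPer (pd i f) := by
  intro x k
  have := congrFun (pd_comp_add_const (f := f) (fun j => (k j : ℝ)) i) x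
  rw [funext fun y => hf y k] at this
  exact this.symm

theorem ZPer.exists_mem_Icc_eq (hf : ZPer f) (x : Fin n → ℝ) :
    ∃ y ∈ Set.Icc (0 : Fin n → ℝ) 1, f y = f x := by
  refine ⟨fun i => Int.fract (x i),
    ⟨fun i => Int.fract_nonneg _, fun i => (Int.fract_lt_one _).le⟩, ?_⟩
  calc f (fun i => Int.fract (x i))
      = f ((fun i => Int.fract (x i)) + fun i => ((⌊x i⌋ : ℤ) : ℝ)) := (hf _ _).symm
    _ = f x := congrArg f (funext fun i => Int.fract_add_floor (x i))

theorem ZPer.hess_eq_zero_of_forall_mem_Icc (hf : ZPer f)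
    (h : ∀ x ∈ Set.Icc (0 : Fin n → ℝ) 1, hess f x = 0) (x : Fin n → ℝ) : hess f x = 0 := by
  ext i j
  obtain ⟨y, hy, hyx⟩ := ((hf.pd j).pd i).exists_mem_Icc_eq x
  rw [hess, of_apply, ← hyx]
  exact congrFun (congrFun (h y hy) i) j

theorem fderiv_eq_fderiv_zero_of_hess_eq_zero (hf : ContDiff ℝ 2 f) (h : ∀ x, hess f x = 0)
    (x : Fin n → ℝ) : fderiv ℝ f x = fderiv ℝ f 0 := by
  refine ContinuousLinearMap.coe_injective <| (Pi.basisFun ℝ (Fin n)).ext fun j => ?_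
  have hd : Differentiable ℝ (pd j f) :=
    (hf.pd (k := 1) (by norm_num) j).differentiable one_ne_zero
  simpa [pd] using is_const_of_fderiv_eq_zero hd
    (fun y => fderiv_eq_zero_of_pd_eq_zero fun i => congrFun (congrFun (h y) i) j) x 0

theorem ZPer.apply_eq_apply_zero_of_fderiv_const (hf : ZPer f) (hd : Differentiable ℝ f)
    (h : ∀ x, fderiv ℝ f x = fderiv ℝ f 0) (x : Fin n → ℝ) : f x = f 0 := by
  set L := fderiv ℝ f 0
  have haffine : ∀ y, f y - L y = f 0 - L 0 := fun y =>
    is_const_of_fderiv_eq_zero (hd.sub L.differentiable)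
      (fun z => by rw [fderiv_sub (hd z) L.differentiableAt, h z, L.fderiv, sub_self]) y 0
  have hL : L = 0 := ContinuousLinearMap.eq_zero_of_apply_single fun i => by
    have hper := hf 0 (Pi.single i 1)
    have hcast : (fun j => (((Pi.single i 1 : Fin n → ℤ) j : ℤ) : ℝ)) = Pi.single i 1 := by
      ext j; simp [Pi.single_apply]
    rw [zero_add, hcast] at hper
    simpa [hper] using haffine (Pi.single i 1)
  simpa [hL] using haffine x

theorem kernel_of_linearization_is_constant_general {n : ℕ} (φ ψ : (Fin n → ℝ) → ℝ)
    (hφ : ContDiff ℝ (⊤ : ℕ∞) φ)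
    (hpos : ∀ x, (hess (fun y => (1 / 2 : ℝ) * ∑ i, y i ^ 2 + φ y) x).PosDef)
    (hψ : ContDiff ℝ (⊤ : ℕ∞) ψ) (hψper : ZPer ψ)
    (hint : ∫ x in Set.Icc (0 : Fin n → ℝ) 1,
      ∑ i, ∑ j, ∑ a, ∑ b,
        (hess (fun y => (1 / 2 : ℝ) * ∑ i, y i ^ 2 + φ y) x)⁻¹ i a *
          hess ψ x a b *
          (hess (fun y => (1 / 2 : ℝ) * ∑ i, y i ^ 2 + φ y) x)⁻¹ b j *
          hess ψ x i j = 0) :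
    ∃ c : ℝ, ∀ x, ψ x = c := by
  set u : (Fin n → ℝ) → ℝ := fun y => (1 / 2 : ℝ) * ∑ i, y i ^ 2 + φ y
  have hu : ContDiff ℝ 2 u :=
    (contDiff_const.mul (ContDiff.sum fun i _ => (contDiff_apply ℝ ℝ i).pow 2)).add
      (hφ.of_le (WithTop.coe_le_coe.mpr le_top))
  have hψ2 : ContDiff ℝ 2 ψ := hψ.of_le (WithTop.coe_le_coe.mpr le_top)
  have hcont :
      Continuous fun x => trace ((hess u x)⁻¹ * hess ψ x * (hess u x)⁻¹ * (hess ψ x)ᴴ) := by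
    have hB := hu.continuous_hess.matrix_inv fun x => (hpos x).det_pos.ne'
    have hH := hψ2.continuous_hess
    exact (((hB.mul hH).mul hB).mul hH.matrix_conjTranspose).matrix_trace
  have hzero := eqOn_zero_of_setIntegral_eq_zero isCompact_Icc
    (Set.Icc_subset_closure_interior_pi (a := 0) (b := 1) fun _ => zero_ne_one)
    hcont.continuousOn
    (fun x _ => (hpos x).inv.trace_mul_mul_mul_conjTranspose_nonneg _)
    (by simpa only [sum_mul_mul_mul_eq_trace, conjTranspose_eq_transpose_of_trivial] using hint)
  have hH : ∀ x ∈ Set.Icc (0 : Fin n → ℝ) 1, hess ψ x = 0 := fun x hx =>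
    (hpos x).inv.trace_mul_mul_mul_conjTranspose_eq_zero_iff.mp (hzero hx)
  exact ⟨ψ 0, hψper.apply_eq_apply_zero_of_fderiv_const (hψ2.differentiable two_ne_zero)
    (fderiv_eq_fderiv_zero_of_hess_eq_zero hψ2 (hψper.hess_eq_zero_of_forall_mem_Icc hH))⟩

theorem kernel_of_linearization_is_constant {n : ℕ} (φ ψ : (Fin n → ℝ) → ℝ)
    (hφ : ContDiff ℝ (⊤ : ℕ∞) φ) (hφper : ZPer φ)
    (hpos : ∀ x, (hess (fun y => (1 / 2 : ℝ) * ∑ i, y i ^ 2 + φ y) x).PosDef)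
    (hψ : ContDiff ℝ (⊤ : ℕ∞) ψ) (hψper : ZPer ψ)
    (hint : ∫ x in Set.Icc (0 : Fin n → ℝ) 1,
      ∑ i, ∑ j, ∑ a, ∑ b,
        (hess (fun y => (1 / 2 : ℝ) * ∑ i, y i ^ 2 + φ y) x)⁻¹ i a *
          hess ψ x a b *
          (hess (fun y => (1 / 2 : ℝ) * ∑ i, y i ^ 2 + φ y) x)⁻¹ b j *
          hess ψ x i j = 0) :
    ∃ c : ℝ, ∀ x, ψ x = c :=
  kernel_of_linearization_is_constant_general φ ψ hφ hpos hψ hψper hint
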